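/- arXiv:2506.18811 — 5 statements merged into one kernel-verified Lean document; each statement's English description precedes it below -/
import Mathlib

section
/- For every real number w with 0 < w < 1, the integral from t = 0 to 1 of 1/((1−t)² + 2·w·t·(1−t) + t²) dt equals 2·arctan((1−w)/√(1−w²))/√(1−w²). -/
theorem stmt_7 (w : ℝ) (hw0 : 0 < w) (hw1 : w < 1) :
    ∫ t in (0:ℝ)..1, 1 / ((1 - t)^2 + 2 * w * t * (1 - t) + t^2)
      = 2 * Real.arctan ((1 - w) / Real.sqrt (1 - w^2)) / Real.sqrt (1 - w^2) := by
  set s := Real.sqrt (1 - w^2) with hs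
  have h1w2 : 0 < 1 - w^2 := by nlinarith
  have hspos : 0 < s := Real.sqrt_pos.mpr h1w2
  have hs2 : s^2 = 1 - w^2 := Real.sq_sqrt h1w2.le
  have hDpos : ∀ t : ℝ, 0 < (1 - t)^2 + 2 * w * t * (1 - t) + t^2 := by
    intro t
    nlinarith [sq_nonneg (2*t - 1), sq_nonneg t, sq_nonneg (1 - t)]
  have hderiv : ∀ t ∈ Set.uIcc (0:ℝ) 1,
      HasDerivAt (fun t : ℝ => Real.arctan ((1 - w) * (2*t - 1) / s) / s)
        (1 / ((1 - t)^2 + 2 * w * t * (1 - t) + t^2)) t := by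
    intro t _
    have hu : HasDerivAt (fun t : ℝ => (1 - w) * (2*t - 1) / s) ((1 - w) * 2 / s) t := by
      have : HasDerivAt (fun t : ℝ => (1 - w) * (2*t - 1)) ((1 - w) * 2) t := by
        simpa using ((hasDerivAt_id t).const_mul 2 |>.sub_const 1 |>.const_mul (1 - w))
      exact this.div_const s
    have h := (hu.arctan).div_const s
    refine h.congr_deriv ?_
    symm
    have hD := (hDpos t).ne'
    have h1w : (1 - w) ≠ 0 := by linarith
    have key : 1 + ((1 - w) * (2 * t - 1) / s) ^ 2
        = 2 * (1 - w) * ((1 - t)^2 + 2 * w * t * (1 - t) + t^2) / s ^ 2 := by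
      rw [div_pow, hs2]
      field_simp
      ring
    rw [key]
    field_simp
  have hcont : IntervalIntegrable
      (fun t : ℝ => 1 / ((1 - t)^2 + 2 * w * t * (1 - t) + t^2)) MeasureTheory.volume 0 1 := by
    apply Continuous.intervalIntegrable
    apply Continuous.div continuous_const (by continuity)
    intro t
    exact (hDpos t).ne'
  rw [intervalIntegral.integral_eq_sub_of_hasDerivAt hderiv hcont]
  have e1 : (1 - w) * (2*(1:ℝ) - 1) / s = (1 - w) / s := by ring_nf
  have e0 : (1 - w) * (2*(0:ℝ) - 1) / s = -((1 - w) / s) := by ring_nf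
  rw [e1, e0, Real.arctan_neg]
  ring
end

section
/- For every real number w with w > 1, the integral from t = 0 to 1 of 1/((1−t)² + 2·w·t·(1−t) + t²) dt equals 2·artanh((w−1)/√(w²−1))/√(w²−1). -/
/-- The inverse hyperbolic tangent: `artanh x = (1/2) * log ((1 + x) / (1 - x))`. -/
noncomputable def artanh (x : ℝ) : ℝ := (1/2) * Real.log ((1 + x) / (1 - x))

theorem stmt_8 (w : ℝ) (hw : 1 < w) :
    ∫ t in (0:ℝ)..1, 1 / ((1 - t)^2 + 2 * w * t * (1 - t) + t^2)
      = 2 * artanh ((w - 1) / Real.sqrt (w^2 - 1)) / Real.sqrt (w^2 - 1) := by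
  set c := Real.sqrt (w^2 - 1) with hcdef
  have hc2 : c^2 = w^2 - 1 := Real.sq_sqrt (by nlinarith)
  have hcpos : 0 < c := Real.sqrt_pos.mpr (by nlinarith)
  have hwc : w - 1 < c := by nlinarith
  set F : ℝ → ℝ := fun t =>
    (1/(2*c)) * (Real.log (1 + (w-1)*(2*t-1)/c) - Real.log (1 - (w-1)*(2*t-1)/c)) with hF
  have key : ∀ t ∈ Set.uIcc (0:ℝ) 1,
      HasDerivAt F (1 / ((1 - t)^2 + 2 * w * t * (1 - t) + t^2)) t := by
    intro t ht
    rw [Set.uIcc_of_le (by norm_num)] at ht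
    obtain ⟨ht0, ht1⟩ := ht
    have hnum1 : 0 < c + (w-1)*(2*t-1) := by nlinarith
    have hnum2 : 0 < c - (w-1)*(2*t-1) := by nlinarith
    have h1 : 0 < 1 + (w-1)*(2*t-1)/c := by
      rw [show 1 + (w-1)*(2*t-1)/c = (c + (w-1)*(2*t-1))/c by field_simp]
      positivity
    have h2 : 0 < 1 - (w-1)*(2*t-1)/c := by
      rw [show 1 - (w-1)*(2*t-1)/c = (c - (w-1)*(2*t-1))/c by field_simp]
      positivity
    have hu : HasDerivAt (fun t : ℝ => (w-1)*(2*t-1)/c) (2*(w-1)/c) t := by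
      have h := ((((hasDerivAt_id t).const_mul (2:ℝ)).sub_const 1).const_mul (w-1)).div_const c
      refine h.congr_deriv ?_
      ring
    have hA : HasDerivAt (fun t : ℝ => Real.log (1 + (w-1)*(2*t-1)/c))
        ((2*(w-1)/c) / (1 + (w-1)*(2*t-1)/c)) t := (hu.const_add 1).log (ne_of_gt h1)
    have hB : HasDerivAt (fun t : ℝ => Real.log (1 - (w-1)*(2*t-1)/c))
        ((-(2*(w-1)/c)) / (1 - (w-1)*(2*t-1)/c)) t := (hu.const_sub 1).log (ne_of_gt h2)
    have hD : 0 < (1 - t)^2 + 2 * w * t * (1 - t) + t^2 := by nlinarith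
    have h := ((hA.sub hB).const_mul (1/(2*c)))
    refine h.congr_deriv ?_
    field_simp
    rw [eq_div_iff (by nlinarith [hD])]
    nlinarith [hc2, sq_nonneg t, sq_nonneg (2*t-1)]
  have hint : IntervalIntegrable
      (fun t => 1 / ((1 - t)^2 + 2 * w * t * (1 - t) + t^2)) MeasureTheory.volume 0 1 := by
    apply ContinuousOn.intervalIntegrable
    apply ContinuousOn.div continuousOn_const (by fun_prop)
    intro t ht
    rw [Set.uIcc_of_le (by norm_num)] at ht
    obtain ⟨ht0, ht1⟩ := ht
    nlinarith [mul_nonneg (mul_nonneg (by linarith : (0:ℝ) ≤ w - 1) ht0)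
      (by linarith : (0:ℝ) ≤ 1 - t)]
  rw [intervalIntegral.integral_eq_sub_of_hasDerivAt key hint]
  have ha1 : 0 < 1 + (w-1)/c := by
    have : 0 < (w-1)/c := div_pos (by linarith) hcpos
    linarith
  have ha2 : 0 < 1 - (w-1)/c := by
    rw [sub_pos, div_lt_one hcpos]; exact hwc
  simp only [hF, artanh]
  rw [Real.log_div (ne_of_gt ha1) (ne_of_gt ha2)]
  have e1 : (w-1)*(2*(1:ℝ)-1)/c = (w-1)/c := by ring
  have e0 : (w-1)*(2*(0:ℝ)-1)/c = -((w-1)/c) := by ring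
  rw [e1, e0]
  have : (1 : ℝ) + -((w-1)/c) = 1 - (w-1)/c := by ring
  rw [this]
  have : (1 : ℝ) - -((w-1)/c) = 1 + (w-1)/c := by ring
  rw [this]
  field_simp
  ring
end

section
/- For every real number w with 0 < w < 1, the integral from t = 0 to 1 of t·(1−t)/((1−t)² + 2·w·t·(1−t) + t²) dt equals (2·Θ(w) − 1)/(2·(1−w)), where Θ(w) = arctan((1−w)/√(1−w²))/√(1−w²). -/
theorem stmt_9 (w : ℝ) (hw0 : 0 < w) (hw1 : w < 1) :
    ∫ t in (0:ℝ)..1, t * (1 - t) / ((1 - t)^2 + 2 * w * t * (1 - t) + t^2)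
      = (2 * (Real.arctan ((1 - w) / Real.sqrt (1 - w^2)) / Real.sqrt (1 - w^2)) - 1)
          / (2 * (1 - w)) := by
  set s : ℝ := Real.sqrt (1 - w^2) with hs_def
  have hw2 : (0:ℝ) < 1 - w^2 := by nlinarith
  have hs2 : s^2 = 1 - w^2 := Real.sq_sqrt (le_of_lt hw2)
  have hs_pos : 0 < s := Real.sqrt_pos.mpr hw2
  have hs_ne : s ≠ 0 := ne_of_gt hs_pos
  have ha : (0:ℝ) < 1 - w := by linarith
  have ha_ne : (1:ℝ) - w ≠ 0 := ne_of_gt ha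
  have hD : ∀ t : ℝ, 0 < (1 - t)^2 + 2 * w * t * (1 - t) + t^2 := by
    intro t
    nlinarith [mul_nonneg ha.le (sq_nonneg (2*t - 1))]
  set F : ℝ → ℝ := fun t =>
    (1/(2*(1-w))) * ((1/s) * Real.arctan ((2*t-1)*(1-w)/s) - t) with hF_def
  have key : ∀ t ∈ Set.uIcc (0:ℝ) 1,
      HasDerivAt F (t * (1 - t) / ((1 - t)^2 + 2 * w * t * (1 - t) + t^2)) t := by
    intro t _
    have h1 : HasDerivAt (fun t : ℝ => (2*t-1)*(1-w)/s) (2*(1-w)/s) t := by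
      have := (((hasDerivAt_id t).const_mul 2).sub_const 1).mul_const (1-w) |>.div_const s
      simpa [mul_comm] using this
    have h2 := (Real.hasDerivAt_arctan ((2*t-1)*(1-w)/s)).comp t h1
    have h3 := ((h2.const_mul (1/s)).sub (hasDerivAt_id t)).const_mul (1/(2*(1-w)))
    refine h3.congr_deriv (Eq.symm ?_)
    have hx : (0:ℝ) < 1 + ((2*t-1)*(1-w)/s)^2 := by positivity
    have hDt := ne_of_gt (hD t)
    field_simp
    ring_nf
    have h4 : s^4 = (1-w^2)^2 := by rw [show s^4 = (s^2)^2 by ring, hs2]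
    rw [hs2]
    have hD' : (1 - t * 2 + t * w * 2 + t ^ 2 * 2 - t ^ 2 * w * 2) ≠ 0 := by
      convert hDt using 1; ring
    field_simp
    ring
  have hcont : Continuous fun t : ℝ =>
      t * (1 - t) / ((1 - t)^2 + 2 * w * t * (1 - t) + t^2) := by
    apply Continuous.div (by continuity) (by continuity)
    intro t; exact ne_of_gt (hD t)
  have := intervalIntegral.integral_eq_sub_of_hasDerivAt key
    (hcont.intervalIntegrable 0 1)
  rw [this]
  have hA : ((2*(1:ℝ)-1)*(1-w)/s) = (1-w)/s := by ring
  have hB : ((2*(0:ℝ)-1)*(1-w)/s) = -((1-w)/s) := by ring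
  simp only [hF_def, hA, hB, Real.arctan_neg]
  field_simp
  ring
end

section
/- For every real number w with 0 < w < 1, the integral from t = 0 to 1 of 1/((1−t)² + 2·w·t·(1−t) + t²)² dt equals (1 + 2·Θ(w))/(1+w), where Θ(w) = arctan((1−w)/√(1−w²))/√(1−w²). -/
theorem stmt_10 (w : ℝ) (hw0 : 0 < w) (hw1 : w < 1) :
    ∫ t in (0:ℝ)..1, 1 / ((1 - t)^2 + 2 * w * t * (1 - t) + t^2)^2
      = (1 + 2 * (Real.arctan ((1 - w) / Real.sqrt (1 - w^2)) / Real.sqrt (1 - w^2)))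
          / (1 + w) := by
  have h1w : (0:ℝ) < 1 + w := by linarith
  have h1w' : (0:ℝ) < 1 - w := by linarith
  set k : ℝ := Real.sqrt ((1 - w) / (1 + w)) with hkdef
  have hkpos : 0 < k := Real.sqrt_pos.mpr (by positivity)
  have hk2 : k ^ 2 = (1 - w) / (1 + w) := Real.sq_sqrt (by positivity)
  have hk2' : k ^ 2 * (1 + w) = 1 - w := by
    rw [hk2]; field_simp
  have hs : Real.sqrt (1 - w ^ 2) = (1 + w) * k := by
    rw [show (1 - w ^ 2) = (1 + w) ^ 2 * ((1 - w) / (1 + w)) by field_simp; ring]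
    rw [Real.sqrt_mul (sq_nonneg _), Real.sqrt_sq h1w.le]
  have harg : (1 - w) / Real.sqrt (1 - w ^ 2) = k := by
    rw [hs, ← hk2']
    field_simp
  have hD : ∀ t : ℝ, 0 < (1 - t)^2 + 2 * w * t * (1 - t) + t^2 := by
    intro t; nlinarith [sq_nonneg (2*t-1), sq_nonneg t, sq_nonneg (1-t)]
  set F : ℝ → ℝ := fun t =>
    (t - 1/2) / ((1 + w) * ((1 - t)^2 + 2 * w * t * (1 - t) + t^2))
      + Real.arctan (k * (2*t - 1)) / ((1 + w)^2 * k) with hF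
  have hderiv : ∀ t ∈ Set.uIcc (0:ℝ) 1,
      HasDerivAt F (1 / ((1 - t)^2 + 2 * w * t * (1 - t) + t^2)^2) t := by
    intro t _
    have hDt := hD t
    have hd1 : HasDerivAt (fun x : ℝ => (1-x)^2 + 2*w*x*(1-x) + x^2)
        ((2:ℕ)*(1-t)^(2-1)*(0-1) + ((2*w*1)*(1-t) + ((2*w)*t)*(0-1)) + (2:ℕ)*t^(2-1)) t := by
      have hx : HasDerivAt (fun x : ℝ => x) 1 t := hasDerivAt_id' t
      have hA := ((hasDerivAt_const t (1:ℝ)).sub hx).pow 2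
      have hB := (hx.const_mul (2*w)).mul ((hasDerivAt_const t (1:ℝ)).sub hx)
      have hC := hasDerivAt_pow 2 t
      exact (hA.add hB).add hC
    have hd1' : HasDerivAt (fun x : ℝ => (1-x)^2 + 2*w*x*(1-x) + x^2)
        (2*(1-w)*(2*t-1)) t := by
      convert hd1 using 1
      push_cast
      ring
    have hu : HasDerivAt (fun x : ℝ => x - 1/2) 1 t := (hasDerivAt_id' t).sub_const _
    have hv : HasDerivAt (fun x : ℝ => (1 + w) * ((1-x)^2 + 2*w*x*(1-x) + x^2))
        ((1 + w) * (2*(1-w)*(2*t-1))) t := hd1'.const_mul _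
    have hne : (1 + w) * ((1-t)^2 + 2*w*t*(1-t) + t^2) ≠ 0 := by positivity
    have hterm1 := hu.div hv hne
    have hinner : HasDerivAt (fun x : ℝ => k * (2*x - 1)) (k * 2) t := by
      have hx : HasDerivAt (fun x : ℝ => x) 1 t := hasDerivAt_id' t
      have := ((hx.const_mul (2:ℝ)).sub_const 1).const_mul k
      refine this.congr_deriv ?_
      ring
    have hterm2 := hinner.arctan.div_const ((1 + w)^2 * k)
    have h := hterm1.add hterm2
    have hq : 1 + (k * (2*t - 1))^2
        = 2 * ((1-t)^2 + 2*w*t*(1-t) + t^2) / (1 + w) := by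
      have h1 : (k * (2*t - 1))^2 = k^2 * (2*t-1)^2 := by ring
      rw [h1, hk2]
      field_simp
      ring
    refine h.congr_deriv ?_
    rw [hq]
    field_simp
    ring
  have hcont : Continuous (fun t : ℝ => 1 / ((1 - t)^2 + 2 * w * t * (1 - t) + t^2)^2) := by
    apply Continuous.div continuous_const (by continuity)
    intro t
    exact pow_ne_zero _ (hD t).ne'
  have hint := intervalIntegral.integral_eq_sub_of_hasDerivAt hderiv (hcont.intervalIntegrable 0 1)
  rw [hint, harg, hs, hF]
  norm_num [Real.arctan_neg]
  field_simp
  ring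
end

section
/- Let a = (x_a, y_a), b = (x_b, y_b), c = (x_c, y_c) be points of ℝ², let T = convexHull{a, b, c}, let V denote the two-dimensional Lebesgue measure of T, and let h : ℝ² → ℝ be an affine map with z_a = h(a), z_b = h(b), z_c = h(c). Then: (i) ∫_T h = V·(z_a + z_b + z_c)/3; (ii) ∫_T x·h(x,y) = (V/12)·((z_a+z_b+z_c)·(x_a+x_b+x_c) + x_a·z_a + x_b·z_b + x_c·z_c); (iii) ∫_T y·h(x,y) = (V/12)·((z_a+z_b+z_c)·(y_a+y_b+y_c) + y_a·z_a + y_b·z_b + y_c·z_c); (iv) ∫_T h(x,y)²/2 = (V/12)·(z_a² + z_b² + z_c² + z_a·z_b + z_b·z_c + z_a·z_c). -/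
open MeasureTheory

def Sset : Set (ℝ × ℝ) := {p | 0 ≤ p.1 ∧ 0 ≤ p.2 ∧ p.1 + p.2 ≤ 1}


lemma int01 (A B C t : ℝ) : ∫ v in (0:ℝ)..t, (A + B*v + C*v^2) = A*t + B*t^2/2 + C*t^3/3 := by
  have key : ∀ v : ℝ, HasDerivAt (fun v => A*v + B*v^2/2 + C*v^3/3) (A + B*v + C*v^2) v := by
    intro v
    have h1 : HasDerivAt (fun v : ℝ => A*v) A v := by simpa using (hasDerivAt_id v).const_mul A
    have h2 : HasDerivAt (fun v : ℝ => B*v^2/2) (B*v) v := by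
      have := ((hasDerivAt_pow 2 v).const_mul B).div_const 2
      exact this.congr_deriv (by push_cast; ring)
    have h3 : HasDerivAt (fun v : ℝ => C*v^3/3) (C*v^2) v := by
      have := ((hasDerivAt_pow 3 v).const_mul C).div_const 3
      exact this.congr_deriv (by push_cast; ring)
    exact (h1.add h2).add h3
  rw [intervalIntegral.integral_eq_sub_of_hasDerivAt (fun v _ => key v)
    ((Continuous.intervalIntegrable (by continuity) _ _))]
  ring

lemma int013 (A B C D : ℝ) : ∫ x in (0:ℝ)..1, (A + B*x + C*x^2 + D*x^3) = A + B/2 + C/3 + D/4 := by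
  have key : ∀ v : ℝ, HasDerivAt (fun v => A*v + B*v^2/2 + C*v^3/3 + D*v^4/4) (A + B*v + C*v^2 + D*v^3) v := by
    intro v
    have h1 : HasDerivAt (fun v : ℝ => A*v) A v := by simpa using (hasDerivAt_id v).const_mul A
    have h2 : HasDerivAt (fun v : ℝ => B*v^2/2) (B*v) v := by
      have := ((hasDerivAt_pow 2 v).const_mul B).div_const 2
      exact this.congr_deriv (by push_cast; ring)
    have h3 : HasDerivAt (fun v : ℝ => C*v^3/3) (C*v^2) v := by
      have := ((hasDerivAt_pow 3 v).const_mul C).div_const 3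
      exact this.congr_deriv (by push_cast; ring)
    have h4 : HasDerivAt (fun v : ℝ => D*v^4/4) (D*v^3) v := by
      have := ((hasDerivAt_pow 4 v).const_mul D).div_const 4
      exact this.congr_deriv (by push_cast; ring)
    exact ((h1.add h2).add h3).add h4
  rw [intervalIntegral.integral_eq_sub_of_hasDerivAt (fun v _ => key v)
    ((Continuous.intervalIntegrable (by continuity) _ _))]
  ring

lemma hull_eq : convexHull ℝ {((0:ℝ),(0:ℝ)), ((1:ℝ),(0:ℝ)), ((0:ℝ),(1:ℝ))} = Sset := by
  apply Set.Subset.antisymm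
  · apply convexHull_min
    · intro p hp
      simp only [Set.mem_insert_iff, Set.mem_singleton_iff] at hp
      rcases hp with rfl | rfl | rfl <;> simp [Sset] <;> norm_num
    · intro p hp q hq s t hs ht hst
      simp only [Sset, Set.mem_setOf_eq] at *
      refine ⟨?_, ?_, ?_⟩
      · have : (s • p + t • q).1 = s * p.1 + t * q.1 := by simp
        rw [this]; nlinarith [hp.1, hq.1]
      · have : (s • p + t • q).2 = s * p.2 + t * q.2 := by simp
        rw [this]; nlinarith [hp.2.1, hq.2.1]
      · have h1 : (s • p + t • q).1 = s * p.1 + t * q.1 := by simp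
        have h2 : (s • p + t • q).2 = s * p.2 + t * q.2 := by simp
        rw [h1, h2]; nlinarith [hp.2.2, hq.2.2]
  · intro p hp
    obtain ⟨h1, h2, h3⟩ := hp
    set t := p.1 + p.2 with ht
    have hmem0 : ((0:ℝ),(0:ℝ)) ∈ convexHull ℝ {((0:ℝ),(0:ℝ)), ((1:ℝ),(0:ℝ)), ((0:ℝ),(1:ℝ))} :=
      subset_convexHull ℝ _ (by simp)
    by_cases h0 : t = 0
    · have hp1 : p.1 = 0 := by linarith [h2]
      have hp2 : p.2 = 0 := by rw [ht] at h0; linarith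
      have : p = ((0:ℝ),(0:ℝ)) := Prod.ext hp1 hp2
      rw [this]; exact hmem0
    · have ht0 : 0 < t := lt_of_le_of_ne (by positivity) (Ne.symm h0)
      have hq : ((p.1/t, p.2/t) : ℝ × ℝ) ∈ segment ℝ ((1:ℝ),(0:ℝ)) ((0:ℝ),(1:ℝ)) := by
        refine ⟨p.1/t, p.2/t, by positivity, by positivity, ?_, ?_⟩
        · field_simp; linarith
        · ext <;> simp
      have hqmem : ((p.1/t, p.2/t) : ℝ × ℝ) ∈ convexHull ℝ {((0:ℝ),(0:ℝ)), ((1:ℝ),(0:ℝ)), ((0:ℝ),(1:ℝ))} := by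
        have h10 : ((1:ℝ),(0:ℝ)) ∈ convexHull ℝ {((0:ℝ),(0:ℝ)), ((1:ℝ),(0:ℝ)), ((0:ℝ),(1:ℝ))} :=
          subset_convexHull ℝ _ (by simp)
        have h01 : ((0:ℝ),(1:ℝ)) ∈ convexHull ℝ {((0:ℝ),(0:ℝ)), ((1:ℝ),(0:ℝ)), ((0:ℝ),(1:ℝ))} :=
          subset_convexHull ℝ _ (by simp)
        exact (convex_convexHull ℝ _).segment_subset h10 h01 hq
      have hpseg : p ∈ segment ℝ ((0:ℝ),(0:ℝ)) ((p.1/t, p.2/t) : ℝ × ℝ) := by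
        refine ⟨1 - t, t, by linarith, le_of_lt ht0, by ring, ?_⟩
        ext
        · simp; field_simp
        · simp; field_simp
      exact (convex_convexHull ℝ _).segment_subset hmem0 hqmem hpseg

lemma Scompact : IsCompact Sset := by
  rw [← hull_eq]
  exact (Set.toFinite _).isCompact_convexHull ℝ

lemma Smeas : MeasurableSet Sset := Scompact.isClosed.measurableSet

lemma master (c00 c10 c01 c20 c11 c02 : ℝ) :
    ∫ p in Sset, (c00 + c10*p.1 + c01*p.2 + c20*p.1^2 + c11*p.1*p.2 + c02*p.2^2)
      = c00/2 + c10/6 + c01/6 + c20/12 + c11/24 + c02/12 := by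
  set F : ℝ × ℝ → ℝ := fun p => c00 + c10*p.1 + c01*p.2 + c20*p.1^2 + c11*p.1*p.2 + c02*p.2^2 with hF
  have hcont : Continuous F := by fun_prop
  have hint : IntegrableOn F Sset := hcont.continuousOn.integrableOn_compact Scompact
  have hsub : Sset ⊆ Set.Icc (0:ℝ) 1 ×ˢ Set.Icc (0:ℝ) 1 := by
    rintro p ⟨h1, h2, h3⟩
    exact ⟨⟨h1, by linarith⟩, ⟨h2, by linarith⟩⟩
  have step1 : ∫ p in Sset, F p = ∫ p in (Set.Icc (0:ℝ) 1 ×ˢ Set.Icc (0:ℝ) 1), Sset.indicator F p := by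
    rw [setIntegral_indicator Smeas, Set.inter_eq_self_of_subset_right hsub]
  rw [step1]
  have hind : IntegrableOn (Sset.indicator F) (Set.Icc (0:ℝ) 1 ×ˢ Set.Icc (0:ℝ) 1) :=
    (hint.integrable_indicator Smeas).integrableOn
  rw [MeasureTheory.Measure.volume_eq_prod] at hind ⊢
  rw [setIntegral_prod _ hind]
  have step3 : ∀ x ∈ Set.Icc (0:ℝ) 1,
      (∫ y in Set.Icc (0:ℝ) 1, Sset.indicator F (x, y))
        = (c00 + c10*x + c20*x^2)*(1-x) + (c01 + c11*x)*(1-x)^2/2 + c02*(1-x)^3/3 := by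
    intro x hx
    obtain ⟨hx0, hx1⟩ := hx
    have hiff : ∀ y : ℝ, Sset.indicator F (x, y) = (Set.Icc 0 (1-x)).indicator (fun y => F (x, y)) y := by
      intro y
      by_cases hy : (x, y) ∈ Sset
      · rw [Set.indicator_of_mem hy,
          Set.indicator_of_mem (Set.mem_Icc.mpr ⟨hy.2.1, by linarith [hy.2.2]⟩)]
      · rw [Set.indicator_of_notMem hy, Set.indicator_of_notMem]
        rintro ⟨hy1, hy2⟩
        exact hy ⟨hx0, hy1, by linarith⟩
    simp_rw [hiff]
    rw [setIntegral_indicator measurableSet_Icc]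
    have : Set.Icc (0:ℝ) 1 ∩ Set.Icc 0 (1-x) = Set.Icc 0 (1-x) := by
      rw [Set.Icc_inter_Icc]
      simp [min_eq_right (show (1:ℝ) - x ≤ 1 by linarith)]
    rw [this, integral_Icc_eq_integral_Ioc, ← intervalIntegral.integral_of_le (by linarith : (0:ℝ) ≤ 1 - x)]
    have hre : ∫ y in (0:ℝ)..(1-x), F (x, y)
        = ∫ y in (0:ℝ)..(1-x), ((c00 + c10*x + c20*x^2) + (c01 + c11*x)*y + c02*y^2) := by
      apply intervalIntegral.integral_congr
      intro y _
      simp only [hF]; ring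
    rw [hre, int01]
  rw [setIntegral_congr_fun measurableSet_Icc step3]
  rw [integral_Icc_eq_integral_Ioc, ← intervalIntegral.integral_of_le (by norm_num : (0:ℝ) ≤ 1)]
  have hre2 : ∫ x in (0:ℝ)..1, ((c00 + c10*x + c20*x^2)*(1-x) + (c01 + c11*x)*(1-x)^2/2 + c02*(1-x)^3/3)
      = ∫ x in (0:ℝ)..1, ((c00 + c01/2 + c02/3) + (-c00 + c10 - c01 + c11/2 - c02)*x
          + (-c10 + c01/2 + c20 - c11 + c02)*x^2 + (-c20 + c11/2 - c02/3)*x^3) := by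
    apply intervalIntegral.integral_congr
    intro y _
    ring
  rw [hre2, int013]
  ring

theorem stmt_16 (a b c : ℝ × ℝ) (h : (ℝ × ℝ) →ᵃ[ℝ] ℝ)
    (x_a y_a x_b y_b x_c y_c z_a z_b z_c : ℝ)
    (ha : a = (x_a, y_a)) (hb : b = (x_b, y_b)) (hc : c = (x_c, y_c))
    (hza : z_a = h a) (hzb : z_b = h b) (hzc : z_c = h c) :
    (∫ p in convexHull ℝ {a, b, c}, h p
        = (volume (convexHull ℝ {a, b, c} : Set (ℝ × ℝ))).toReal * (z_a + z_b + z_c) / 3)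
    ∧ (∫ p in convexHull ℝ {a, b, c}, p.1 * h p
        = (volume (convexHull ℝ {a, b, c} : Set (ℝ × ℝ))).toReal / 12
            * ((z_a + z_b + z_c) * (x_a + x_b + x_c) + x_a * z_a + x_b * z_b + x_c * z_c))
    ∧ (∫ p in convexHull ℝ {a, b, c}, p.2 * h p
        = (volume (convexHull ℝ {a, b, c} : Set (ℝ × ℝ))).toReal / 12
            * ((z_a + z_b + z_c) * (y_a + y_b + y_c) + y_a * z_a + y_b * z_b + y_c * z_c))
    ∧ (∫ p in convexHull ℝ {a, b, c}, (h p)^2 / 2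
        = (volume (convexHull ℝ {a, b, c} : Set (ℝ × ℝ))).toReal / 12
            * (z_a^2 + z_b^2 + z_c^2 + z_a * z_b + z_b * z_c + z_a * z_c)) := by
  set D : ℝ := (x_b - x_a) * (y_c - y_a) - (x_c - x_a) * (y_b - y_a) with hD_def
  by_cases hD : D = 0
  · -- degenerate case
    have hspan : affineSpan ℝ ({a, b, c} : Set (ℝ × ℝ)) ≠ ⊤ := by
      intro htop
      have hvs : ∀ v : ℝ × ℝ, v ∈ vectorSpan ℝ ({a, b, c} : Set (ℝ × ℝ)) := by
        intro v
        rw [← direction_affineSpan, htop, AffineSubspace.direction_top]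
        exact Submodule.mem_top
      have hle : vectorSpan ℝ ({a, b, c} : Set (ℝ × ℝ)) ≤ Submodule.span ℝ {b - a, c - a} := by
        rw [vectorSpan_def]
        apply Submodule.span_le.mpr
        rintro v ⟨x, hx, y, hy, rfl⟩
        have hba : b - a ∈ Submodule.span ℝ {b - a, c - a} := Submodule.subset_span (by simp)
        have hca : c - a ∈ Submodule.span ℝ {b - a, c - a} := Submodule.subset_span (by simp)
        simp only [Set.mem_insert_iff, Set.mem_singleton_iff] at hx hy
        show x - y ∈ _
        rcases hx with rfl | rfl | rfl <;> rcases hy with rfl | rfl | rfl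
        · simpa using Submodule.zero_mem _
        · simpa [neg_sub] using Submodule.neg_mem _ hba
        · simpa [neg_sub] using Submodule.neg_mem _ hca
        · exact hba
        · simpa using Submodule.zero_mem _
        · have := Submodule.sub_mem _ hba hca; simpa [sub_sub_sub_cancel_right] using this
        · exact hca
        · have := Submodule.sub_mem _ hca hba; simpa [sub_sub_sub_cancel_right] using this
        · simpa using Submodule.zero_mem _
      obtain ⟨s, t, hst⟩ := Submodule.mem_span_pair.mp (hle (hvs (1, 0)))
      obtain ⟨s', t', hst'⟩ := Submodule.mem_span_pair.mp (hle (hvs (0, 1)))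
      rw [ha, hb, hc] at hst hst'
      have e1 : s * (x_b - x_a) + t * (x_c - x_a) = 1 := by
        have := congrArg Prod.fst hst; simpa using this
      have e2 : s * (y_b - y_a) + t * (y_c - y_a) = 0 := by
        have := congrArg Prod.snd hst; simpa using this
      have e3 : s' * (x_b - x_a) + t' * (x_c - x_a) = 0 := by
        have := congrArg Prod.fst hst'; simpa using this
      have e4 : s' * (y_b - y_a) + t' * (y_c - y_a) = 1 := by
        have := congrArg Prod.snd hst'; simpa using this
      have key : (s * t' - s' * t) * D
          = (s * (x_b - x_a) + t * (x_c - x_a)) * (s' * (y_b - y_a) + t' * (y_c - y_a))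
            - (s' * (x_b - x_a) + t' * (x_c - x_a)) * (s * (y_b - y_a) + t * (y_c - y_a)) := by
        rw [hD_def]; ring
      rw [e1, e2, e3, e4, hD] at key
      norm_num at key
    have hvol : volume (convexHull ℝ ({a, b, c} : Set (ℝ × ℝ))) = 0 :=
      measure_mono_null (convexHull_subset_affineSpan _)
        (Measure.addHaar_affineSubspace volume _ hspan)
    have hint0 : ∀ g : ℝ × ℝ → ℝ, ∫ p in convexHull ℝ ({a, b, c} : Set (ℝ × ℝ)), g p = 0 := by
      intro g
      rw [Measure.restrict_eq_zero.mpr hvol]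
      exact integral_zero_measure _
    refine ⟨?_, ?_, ?_, ?_⟩ <;> rw [hint0, hvol] <;> simp
  · -- nondegenerate case
    set L : (ℝ × ℝ) →ₗ[ℝ] (ℝ × ℝ) :=
      Matrix.toLin (Module.Basis.finTwoProd ℝ) (Module.Basis.finTwoProd ℝ)
        !![x_b - x_a, x_c - x_a; y_b - y_a, y_c - y_a] with hL_def
    have hLapp : ∀ p : ℝ × ℝ, L p = ((x_b - x_a) * p.1 + (x_c - x_a) * p.2,
        (y_b - y_a) * p.1 + (y_c - y_a) * p.2) := by
      intro p
      rw [hL_def, Matrix.toLin_finTwoProd_apply]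
    have hLdet : LinearMap.det L = D := by
      rw [hL_def, LinearMap.det_toLin, Matrix.det_fin_two_of, hD_def]
    set Lc : (ℝ × ℝ) →L[ℝ] (ℝ × ℝ) := LinearMap.toContinuousLinearMap L with hLc_def
    have hLcdet : Lc.det = D := by
      rw [← hLdet]
      rfl
    set f : ℝ × ℝ → ℝ × ℝ := fun p => Lc p + (x_a, y_a) with hf_def
    have hfapp : ∀ p : ℝ × ℝ, f p = (x_a + (x_b - x_a) * p.1 + (x_c - x_a) * p.2,
        y_a + (y_b - y_a) * p.1 + (y_c - y_a) * p.2) := by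
      intro p
      rw [hf_def]
      show L p + ((x_a : ℝ), (y_a : ℝ)) = _
      rw [hLapp]
      ext <;> simp <;> ring
    have hderiv : ∀ p ∈ Sset, HasFDerivWithinAt f Lc Sset p := by
      intro p _
      exact (Lc.hasFDerivAt.add_const _).hasFDerivWithinAt
    have hinj : Set.InjOn f Sset := by
      intro p _ q _ hpq
      rw [hfapp p, hfapp q] at hpq
      have h1 := congrArg Prod.fst hpq
      have h2 := congrArg Prod.snd hpq
      simp only at h1 h2
      have k1 : D * (p.1 - q.1) = 0 := by
        rw [hD_def]; linear_combination (y_c - y_a) * h1 - (x_c - x_a) * h2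
      have k2 : D * (p.2 - q.2) = 0 := by
        rw [hD_def]; linear_combination (x_b - x_a) * h2 - (y_b - y_a) * h1
      have e1 : p.1 = q.1 := by
        rcases mul_eq_zero.mp k1 with hc | hc
        · exact absurd hc hD
        · linarith [sub_eq_zero.mp hc]
      have e2 : p.2 = q.2 := by
        rcases mul_eq_zero.mp k2 with hc | hc
        · exact absurd hc hD
        · linarith [sub_eq_zero.mp hc]
      exact Prod.ext e1 e2
    -- f as an affine map, to transport the convex hull
    have himg : f '' Sset = convexHull ℝ ({a, b, c} : Set (ℝ × ℝ)) := by
      have hA : ∃ A : (ℝ × ℝ) →ᵃ[ℝ] (ℝ × ℝ), ⇑A = f := by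
        refine ⟨⟨f, L, ?_⟩, rfl⟩
        intro p v
        show f (v + p) = L v + f p
        rw [hfapp, hfapp, hLapp]
        ext <;> simp <;> ring
      obtain ⟨A, hAf⟩ := hA
      rw [← hull_eq, ← hAf, AffineMap.image_convexHull]
      congr 1
      rw [Set.image_insert_eq, Set.image_insert_eq, Set.image_singleton, hAf]
      rw [hfapp, hfapp, hfapp, ha, hb, hc]
      norm_num
    have cov : ∀ g : ℝ × ℝ → ℝ, ∫ p in convexHull ℝ ({a, b, c} : Set (ℝ × ℝ)), g p
        = ∫ p in Sset, |D| * g (f p) := by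
      intro g
      rw [← himg, integral_image_eq_integral_abs_det_fderiv_smul volume Smeas hderiv hinj g]
      simp only [hLcdet, smul_eq_mul]
    -- h ∘ f
    have hhf : ∀ p : ℝ × ℝ, h (f p) = z_a + p.1 * (z_b - z_a) + p.2 * (z_c - z_a) := by
      intro p
      have hsplit : f p = (p.1 • (b - a) + p.2 • (c - a)) +ᵥ a := by
        rw [hfapp, ha, hb, hc]
        rw [vadd_eq_add]
        ext <;> simp <;> ring
      rw [hsplit, AffineMap.map_vadd, map_add, LinearMap.map_smul, LinearMap.map_smul]
      have hb' : h.linear (b - a) = h b - h a := h.linearMap_vsub b a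
      have hc' : h.linear (c - a) = h c - h a := h.linearMap_vsub c a
      rw [hb', hc', hza, hzb, hzc]
      show p.1 * _ + p.2 * _ + _ = _
      ring
    -- volume of the triangle
    have hvolT : (volume (convexHull ℝ ({a, b, c} : Set (ℝ × ℝ)))).toReal = |D| / 2 := by
      have h1 := cov (fun _ => (1 : ℝ))
      rw [setIntegral_const, smul_eq_mul, mul_one] at h1
      rw [← measureReal_def, h1]
      have h2 : ∫ p in Sset, |D| * (1 : ℝ)
          = ∫ p in Sset, (|D| + 0 * p.1 + 0 * p.2 + 0 * p.1 ^ 2 + 0 * p.1 * p.2 + 0 * p.2 ^ 2) :=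
        setIntegral_congr_fun Smeas (fun p _ => by ring)
      rw [h2, master]
      ring
    refine ⟨?_, ?_, ?_, ?_⟩
    · rw [cov, hvolT]
      have e : ∫ p in Sset, |D| * h (f p)
          = ∫ p in Sset, (|D| * z_a + (|D| * (z_b - z_a)) * p.1 + (|D| * (z_c - z_a)) * p.2
              + 0 * p.1 ^ 2 + 0 * p.1 * p.2 + 0 * p.2 ^ 2) :=
        setIntegral_congr_fun Smeas (fun p _ => by rw [hhf p]; ring)
      rw [e, master]
      ring
    · rw [cov, hvolT]
      have e : ∫ p in Sset, |D| * ((f p).1 * h (f p))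
          = ∫ p in Sset, ((|D| * (x_a * z_a))
              + (|D| * (x_a * (z_b - z_a) + (x_b - x_a) * z_a)) * p.1
              + (|D| * (x_a * (z_c - z_a) + (x_c - x_a) * z_a)) * p.2
              + (|D| * ((x_b - x_a) * (z_b - z_a))) * p.1 ^ 2
              + (|D| * ((x_b - x_a) * (z_c - z_a) + (x_c - x_a) * (z_b - z_a))) * p.1 * p.2
              + (|D| * ((x_c - x_a) * (z_c - z_a))) * p.2 ^ 2) :=
        setIntegral_congr_fun Smeas (fun p _ => by rw [hhf p, hfapp p]; ring)
      rw [e, master]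
      ring
    · rw [cov, hvolT]
      have e : ∫ p in Sset, |D| * ((f p).2 * h (f p))
          = ∫ p in Sset, ((|D| * (y_a * z_a))
              + (|D| * (y_a * (z_b - z_a) + (y_b - y_a) * z_a)) * p.1
              + (|D| * (y_a * (z_c - z_a) + (y_c - y_a) * z_a)) * p.2
              + (|D| * ((y_b - y_a) * (z_b - z_a))) * p.1 ^ 2
              + (|D| * ((y_b - y_a) * (z_c - z_a) + (y_c - y_a) * (z_b - z_a))) * p.1 * p.2
              + (|D| * ((y_c - y_a) * (z_c - z_a))) * p.2 ^ 2) :=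
        setIntegral_congr_fun Smeas (fun p _ => by rw [hhf p, hfapp p]; ring)
      rw [e, master]
      ring
    · rw [cov, hvolT]
      have e : ∫ p in Sset, |D| * ((h (f p)) ^ 2 / 2)
          = ∫ p in Sset, ((|D| * (z_a ^ 2 / 2))
              + (|D| * (z_a * (z_b - z_a))) * p.1
              + (|D| * (z_a * (z_c - z_a))) * p.2
              + (|D| * ((z_b - z_a) ^ 2 / 2)) * p.1 ^ 2
              + (|D| * ((z_b - z_a) * (z_c - z_a))) * p.1 * p.2
              + (|D| * ((z_c - z_a) ^ 2 / 2)) * p.2 ^ 2) :=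
        setIntegral_congr_fun Smeas (fun p _ => by rw [hhf p]; ring)
      rw [e, master]
      ring
end
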